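/- Let f be an entire power series in the class K and let ρ(f) = limsup_{t→∞} ln ln f(t)/ln t be its order. Then liminf_{t→∞} σ_f²(t)/m_f(t) ≤ liminf_{t→∞} ln m_f(t)/ln t ≤ liminf_{t→∞} ln ln f(t)/ln t ≤ limsup_{t→∞} ln ln f(t)/ln t = limsup_{t→∞} ln m_f(t)/ln t = ρ(f) ≤ limsup_{t→∞} σ_f²(t)/m_f(t). -/

import Mathlib

open Filter MeasureTheory Topology Real
open scoped ENNReal

noncomputable section

/-- The filter describing `t ↑ R`: `atTop` if `R = ∞`, else approach `R` from below. -/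
def nhdsLT (R : ℝ≥0∞) : Filter ℝ :=
  if R = ⊤ then atTop else nhdsWithin R.toReal (Set.Iio R.toReal)

/-- The class `K`: nonnegative coefficients, `a 0 > 0`, some `a n > 0` with `n ≥ 1`,
and radius of convergence exactly `R` (all power-type sums converge for `0 < t < R`,
and the basic sum diverges for `t > R`). -/
def IsKClass (a : ℕ → ℝ) (R : ℝ≥0∞) : Prop :=
  (∀ n, 0 ≤ a n) ∧ 0 < a 0 ∧ (∃ n, 1 ≤ n ∧ 0 < a n) ∧
  (∀ β t : ℝ, 0 < t → ENNReal.ofReal t < R →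
    Summable (fun n : ℕ => (n : ℝ) ^ β * a n * t ^ n)) ∧
  (∀ t : ℝ, 0 < t → R < ENNReal.ofReal t → ¬ Summable (fun n : ℕ => a n * t ^ n))

/-- `f(t) = Σ aₙ tⁿ`. -/
def fsum (a : ℕ → ℝ) (t : ℝ) : ℝ := ∑' n : ℕ, a n * t ^ n

/-- `E(X_t^β) = (Σ n^β aₙ tⁿ)/f(t)`. -/
def moment (a : ℕ → ℝ) (β : ℝ) (t : ℝ) : ℝ :=
  (∑' n : ℕ, (n : ℝ) ^ β * a n * t ^ n) / fsum a t

/-- The mean `m_f(t) = E(X_t)`. -/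
def mf (a : ℕ → ℝ) (t : ℝ) : ℝ := moment a 1 t

/-- The variance `σ_f²(t) = E(X_t²) − m_f(t)²`. -/
def varf (a : ℕ → ℝ) (t : ℝ) : ℝ := moment a 2 t - (mf a t) ^ 2

/-- `σ_f(t)`, the nonnegative square root of the variance. -/
def sigmaf (a : ℕ → ℝ) (t : ℝ) : ℝ := Real.sqrt (varf a t)

/-- `f` is a clan if `σ_f(t)/m_f(t) → 0` as `t ↑ R`. -/
def IsClan (a : ℕ → ℝ) (R : ℝ≥0∞) : Prop :=
  Tendsto (fun t => sigmaf a t / mf a t) (nhdsLT R) (𝓝 0)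


lemma hasDerivAt_tsum_pow (b : ℕ → ℝ) (hb : ∀ n, 0 ≤ b n)
    (hs : ∀ r : ℝ, 0 < r → Summable (fun n : ℕ => (n : ℝ) * b n * r ^ n))
    (hs0 : ∀ r : ℝ, 0 < r → Summable (fun n : ℕ => b n * r ^ n))
    {t : ℝ} (ht : 0 < t) :
    HasDerivAt (fun y : ℝ => ∑' n : ℕ, b n * y ^ n)
      ((∑' n : ℕ, (n : ℝ) * b n * t ^ n) / t) t := by
  have key : HasDerivAt (fun y : ℝ => ∑' n : ℕ, b n * y ^ n)
      (∑' n : ℕ, (n : ℝ) * b n * t ^ (n - 1)) t := by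
    have hopen : IsOpen (Set.Ioo (0:ℝ) (t+1)) := isOpen_Ioo
    have htmem : t ∈ Set.Ioo (0:ℝ) (t+1) := ⟨ht, by linarith⟩
    have hu : Summable (fun n : ℕ => (n : ℝ) * b n * (t+1) ^ n / (t+1)) :=
      (hs (t+1) (by linarith)).div_const _
    refine hasDerivAt_of_tendstoUniformlyOn (l := (atTop : Filter (Finset ℕ)))
      (f := fun N : Finset ℕ => fun y : ℝ => ∑ n ∈ N, b n * y ^ n)
      (f' := fun N : Finset ℕ => fun y : ℝ => ∑ n ∈ N, (n : ℝ) * b n * y ^ (n - 1))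
      (g' := fun y : ℝ => ∑' n : ℕ, (n : ℝ) * b n * y ^ (n - 1))
      hopen ?_ ?_ ?_ htmem
    · apply tendstoUniformlyOn_tsum hu
      intro n y hy
      rw [Real.norm_eq_abs, abs_of_nonneg (mul_nonneg (mul_nonneg (Nat.cast_nonneg n) (hb n)) (pow_nonneg hy.1.le _))]
      rcases Nat.eq_zero_or_pos n with h0 | hpos
      · simp [h0]
      · have h1 : y ^ (n-1) ≤ (t+1) ^ (n-1) :=
          pow_le_pow_left₀ hy.1.le (by linarith [hy.2]) _
        have h2 : (t+1) ^ (n-1) = (t+1)^n / (t+1) := by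
          rw [eq_div_iff (by linarith : t+1 ≠ 0), ← pow_succ]
          congr 1
          omega
        calc (n : ℝ) * b n * y ^ (n-1) ≤ (n : ℝ) * b n * (t+1) ^ (n-1) := by
              apply mul_le_mul_of_nonneg_left h1 (mul_nonneg (Nat.cast_nonneg n) (hb n))
          _ = (n : ℝ) * b n * (t+1) ^ n / (t+1) := by rw [h2]; ring
    · filter_upwards with N y _
      apply HasDerivAt.fun_sum
      intro n _
      simpa [mul_comm, mul_assoc, mul_left_comm] using (hasDerivAt_pow n y).const_mul (b n)
    · intro y hy
      exact (hs0 y hy.1).hasSum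
  convert key using 1
  rw [eq_comm, ← tsum_div_const]
  apply tsum_congr
  intro n
  rcases n with _ | m
  · simp
  · simp only [Nat.add_sub_cancel, pow_succ]
    field_simp

def gS (a : ℕ → ℝ) (t : ℝ) : ℝ := ∑' n : ℕ, (n : ℝ) * a n * t ^ n
def hS (a : ℕ → ℝ) (t : ℝ) : ℝ := ∑' n : ℕ, (n : ℝ) ^ 2 * a n * t ^ n

section Setup
variable {a : ℕ → ℝ}

lemma rpow_two' (x : ℝ) : x ^ (2:ℝ) = x ^ (2:ℕ) := by
  rw [show (2:ℝ) = ((2:ℕ):ℝ) by norm_num, Real.rpow_natCast]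

lemma sum_hyp (hK : IsKClass a ⊤) (β t : ℝ) (ht : 0 < t) :
    Summable (fun n : ℕ => (n : ℝ) ^ β * a n * t ^ n) :=
  hK.2.2.2.1 β t ht (by simp)

lemma summable_f (hK : IsKClass a ⊤) {t : ℝ} (ht : 0 < t) :
    Summable (fun n : ℕ => a n * t ^ n) :=
  (sum_hyp hK 0 t ht).congr fun n => by simp [Real.rpow_zero]

lemma summable_g (hK : IsKClass a ⊤) {t : ℝ} (ht : 0 < t) :
    Summable (fun n : ℕ => (n : ℝ) * a n * t ^ n) :=
  (sum_hyp hK 1 t ht).congr fun n => by rw [Real.rpow_one]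

lemma summable_h (hK : IsKClass a ⊤) {t : ℝ} (ht : 0 < t) :
    Summable (fun n : ℕ => (n : ℝ) ^ (2:ℕ) * a n * t ^ n) :=
  (sum_hyp hK 2 t ht).congr fun n => by rw [rpow_two']

lemma fsum_pos (hK : IsKClass a ⊤) {t : ℝ} (ht : 0 < t) : 0 < fsum a t := by
  refine Summable.tsum_pos (summable_f hK ht)
    (fun n => mul_nonneg (hK.1 n) (pow_nonneg ht.le n)) 0 ?_
  simpa using hK.2.1

lemma gS_pos (hK : IsKClass a ⊤) {t : ℝ} (ht : 0 < t) : 0 < gS a t := by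
  obtain ⟨n₀, hn₀, han₀⟩ := hK.2.2.1
  refine Summable.tsum_pos (summable_g hK ht)
    (fun n => mul_nonneg (mul_nonneg (Nat.cast_nonneg n) (hK.1 n)) (pow_nonneg ht.le n)) n₀ ?_
  have : (0:ℝ) < (n₀:ℝ) := by exact_mod_cast hn₀
  positivity

lemma mf_eq : mf a = fun t => gS a t / fsum a t := by
  funext t
  unfold mf moment gS
  congr 1
  exact tsum_congr fun n => by rw [Real.rpow_one]

lemma moment2_eq (t : ℝ) : moment a 2 t = hS a t / fsum a t := by
  unfold moment hS
  congr 1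
  exact tsum_congr fun n => by rw [rpow_two']

lemma mf_pos (hK : IsKClass a ⊤) {t : ℝ} (ht : 0 < t) : 0 < mf a t := by
  rw [mf_eq]; exact div_pos (gS_pos hK ht) (fsum_pos hK ht)

lemma hasDerivAt_fsum (hK : IsKClass a ⊤) {t : ℝ} (ht : 0 < t) :
    HasDerivAt (fsum a) (gS a t / t) t :=
  hasDerivAt_tsum_pow a hK.1 (fun r hr => summable_g hK hr) (fun r hr => summable_f hK hr) ht

lemma hasDerivAt_gS (hK : IsKClass a ⊤) {t : ℝ} (ht : 0 < t) :
    HasDerivAt (gS a) (hS a t / t) t := by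
  have key := hasDerivAt_tsum_pow (fun n => (n:ℝ) * a n)
    (fun n => mul_nonneg (Nat.cast_nonneg n) (hK.1 n))
    (fun r hr => (summable_h hK hr).congr fun n => by ring)
    (fun r hr => summable_g hK hr) ht
  have e1 : gS a = fun y : ℝ => ∑' n : ℕ, ((n:ℝ) * a n) * y ^ n := rfl
  have e2 : hS a t = ∑' n : ℕ, (n:ℝ) * ((n:ℝ) * a n) * t ^ n := by
    unfold hS; exact tsum_congr fun n => by ring
  rw [e1, e2]
  exact key

lemma varf_eq (t : ℝ) : varf a t = hS a t / fsum a t - (gS a t / fsum a t) ^ 2 := by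
  unfold varf
  rw [moment2_eq, mf_eq]

lemma hasDerivAt_mf (hK : IsKClass a ⊤) {t : ℝ} (ht : 0 < t) :
    HasDerivAt (mf a) (varf a t / t) t := by
  rw [mf_eq]
  have h := (hasDerivAt_gS hK ht).div (hasDerivAt_fsum hK ht) (fsum_pos hK ht).ne'
  refine h.congr_deriv ?_
  have hf := fsum_pos hK ht
  rw [varf_eq]
  field_simp

lemma varf_nonneg (hK : IsKClass a ⊤) {t : ℝ} (ht : 0 < t) : 0 ≤ varf a t := by
  set m := mf a t with hm
  have hf := fsum_pos hK ht
  have key : (∑' n : ℕ, ((n:ℝ) - m)^2 * (a n * t ^ n))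
      = hS a t - 2 * m * gS a t + m^2 * fsum a t := by
    have e : ∀ n : ℕ, ((n:ℝ) - m)^2 * (a n * t ^ n)
        = (n:ℝ)^2 * a n * t^n - 2*m*((n:ℝ) * a n * t^n) + m^2*(a n * t^n) := by
      intro n; ring
    rw [tsum_congr e, Summable.tsum_add (Summable.sub (summable_h hK ht)
        (((summable_g hK ht).mul_left (2*m)))) ((summable_f hK ht).mul_left (m^2)),
      Summable.tsum_sub (summable_h hK ht) ((summable_g hK ht).mul_left (2*m)),
      tsum_mul_left, tsum_mul_left]
    rfl
  have hnn : 0 ≤ ∑' n : ℕ, ((n:ℝ) - m)^2 * (a n * t ^ n) :=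
    tsum_nonneg fun n => mul_nonneg (sq_nonneg _) (mul_nonneg (hK.1 n) (pow_nonneg ht.le n))
  rw [key] at hnn
  have hmeq : m = gS a t / fsum a t := by rw [hm, mf_eq]
  rw [varf_eq]
  have expand : hS a t / fsum a t - (gS a t / fsum a t) ^ 2
      = (hS a t - 2*m*gS a t + m^2*fsum a t) / fsum a t := by
    rw [hmeq]; field_simp; ring
  rw [expand]
  exact div_nonneg hnn hf.le

lemma slope_le_slope {φ ψ φ' ψ' : ℝ → ℝ} {s t : ℝ} (hst : s ≤ t)
    (hφ : ∀ u ∈ Set.Icc s t, HasDerivAt φ (φ' u) u)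
    (hψ : ∀ u ∈ Set.Icc s t, HasDerivAt ψ (ψ' u) u)
    (hle : ∀ u ∈ Set.Icc s t, φ' u ≤ ψ' u) :
    φ t - φ s ≤ ψ t - ψ s := by
  have hmono : MonotoneOn (fun u => ψ u - φ u) (Set.Icc s t) := by
    apply monotoneOn_of_deriv_nonneg (convex_Icc s t)
    · exact fun u hu => ((hψ u hu).sub (hφ u hu)).continuousAt.continuousWithinAt
    · intro u hu
      rw [interior_Icc] at hu
      exact (((hψ u (Set.Ioo_subset_Icc_self hu)).sub
        (hφ u (Set.Ioo_subset_Icc_self hu))).differentiableAt).differentiableWithinAt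
    · intro u hu
      rw [interior_Icc] at hu
      rw [((hψ u (Set.Ioo_subset_Icc_self hu)).fun_sub
        (hφ u (Set.Ioo_subset_Icc_self hu))).deriv]
      have := hle u (Set.Ioo_subset_Icc_self hu)
      linarith
  have := hmono (Set.left_mem_Icc.2 hst) (Set.right_mem_Icc.2 hst) hst
  dsimp only at this
  linarith

lemma hasDerivAt_logf (hK : IsKClass a ⊤) {t : ℝ} (ht : 0 < t) :
    HasDerivAt (fun u => Real.log (fsum a u)) (mf a t / t) t := by
  have h := (hasDerivAt_fsum hK ht).log (fsum_pos hK ht).ne'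
  convert h using 1
  rw [mf_eq]
  rw [div_div, div_div, mul_comm]

lemma hasDerivAt_logm (hK : IsKClass a ⊤) {t : ℝ} (ht : 0 < t) :
    HasDerivAt (fun u => Real.log (mf a u)) (varf a t / (t * mf a t)) t := by
  have h := (hasDerivAt_mf hK ht).log (mf_pos hK ht).ne'
  convert h using 1
  rw [div_div, mul_comm]

lemma mf_monotone (hK : IsKClass a ⊤) {s t : ℝ} (hs : 0 < s) (hst : s ≤ t) :
    mf a s ≤ mf a t := by
  have h := slope_le_slope (φ := fun _ => (0:ℝ)) (φ' := fun _ => (0:ℝ))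
    (ψ := mf a) (ψ' := fun u => varf a u / u) hst
    (fun u _ => hasDerivAt_const u 0)
    (fun u hu => hasDerivAt_mf hK (lt_of_lt_of_le hs hu.1))
    (fun u hu => div_nonneg (varf_nonneg hK (lt_of_lt_of_le hs hu.1))
      (le_of_lt (lt_of_lt_of_le hs hu.1)))
  simpa using h

lemma fsum_tendsto (hK : IsKClass a ⊤) : Tendsto (fsum a) atTop atTop := by
  obtain ⟨n₀, hn₀, han₀⟩ := hK.2.2.1
  have key : ∀ᶠ t in atTop, a n₀ * t ^ n₀ ≤ fsum a t := by
    filter_upwards [eventually_gt_atTop (0:ℝ)] with t ht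
    exact Summable.le_tsum (summable_f hK ht) n₀
      (fun n _ => mul_nonneg (hK.1 n) (pow_nonneg ht.le n))
  exact tendsto_atTop_mono' _ key
    ((tendsto_pow_atTop (by omega : n₀ ≠ 0)).const_mul_atTop han₀)

lemma logm_slope_le (hK : IsKClass a ⊤) {s t c : ℝ} (hs : 0 < s) (hst : s ≤ t)
    (hc : ∀ u ∈ Set.Icc s t, varf a u ≤ c * mf a u) :
    Real.log (mf a t) - Real.log (mf a s) ≤ c * Real.log t - c * Real.log s := by
  have h := slope_le_slope (φ := fun u => Real.log (mf a u))
      (φ' := fun u => varf a u / (u * mf a u))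
      (ψ := fun u => c * Real.log u) (ψ' := fun u => c * u⁻¹) hst
      (fun u hu => hasDerivAt_logm hK (lt_of_lt_of_le hs hu.1))
      (fun u hu => (Real.hasDerivAt_log (lt_of_lt_of_le hs hu.1).ne').const_mul c)
      ?_
  · simpa [mul_sub] using h
  · intro u hu
    have hu0 : 0 < u := lt_of_lt_of_le hs hu.1
    have hm : 0 < mf a u := mf_pos hK hu0
    have h1 : varf a u / mf a u ≤ c := (div_le_iff₀ hm).2 (hc u hu)
    show varf a u / (u * mf a u) ≤ c * u⁻¹
    have e : varf a u / (u * mf a u) = (varf a u / mf a u) / u := by ring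
    have e2 : c * u⁻¹ = c / u := by ring
    rw [e, e2]
    gcongr

lemma logm_slope_ge (hK : IsKClass a ⊤) {s t c : ℝ} (hs : 0 < s) (hst : s ≤ t)
    (hc : ∀ u ∈ Set.Icc s t, c * mf a u ≤ varf a u) :
    c * Real.log t - c * Real.log s ≤ Real.log (mf a t) - Real.log (mf a s) := by
  have h := slope_le_slope (ψ := fun u => Real.log (mf a u))
      (ψ' := fun u => varf a u / (u * mf a u))
      (φ := fun u => c * Real.log u) (φ' := fun u => c * u⁻¹) hst
      (fun u hu => (Real.hasDerivAt_log (lt_of_lt_of_le hs hu.1).ne').const_mul c)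
      (fun u hu => hasDerivAt_logm hK (lt_of_lt_of_le hs hu.1))
      ?_
  · simpa [mul_sub] using h
  · intro u hu
    have hu0 : 0 < u := lt_of_lt_of_le hs hu.1
    have hm : 0 < mf a u := mf_pos hK hu0
    have h1 : c ≤ varf a u / mf a u := (le_div_iff₀ hm).2 (hc u hu)
    show c * u⁻¹ ≤ varf a u / (u * mf a u)
    have e : varf a u / (u * mf a u) = (varf a u / mf a u) / u := by ring
    have e2 : c * u⁻¹ = c / u := by ring
    rw [e, e2]
    gcongr

lemma logf_diff_le (hK : IsKClass a ⊤) {s t : ℝ} (hs : 0 < s) (hst : s ≤ t) :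
    Real.log (fsum a t) - Real.log (fsum a s)
      ≤ mf a t * Real.log t - mf a t * Real.log s := by
  have h := slope_le_slope (φ := fun u => Real.log (fsum a u))
      (φ' := fun u => mf a u / u)
      (ψ := fun u => mf a t * Real.log u) (ψ' := fun u => mf a t * u⁻¹) hst
      (fun u hu => hasDerivAt_logf hK (lt_of_lt_of_le hs hu.1))
      (fun u hu => (Real.hasDerivAt_log (lt_of_lt_of_le hs hu.1).ne').const_mul (mf a t))
      ?_
  · simpa [mul_sub] using h
  · intro u hu
    have hu0 : 0 < u := lt_of_lt_of_le hs hu.1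
    show mf a u / u ≤ mf a t * u⁻¹
    rw [div_eq_mul_inv]
    exact mul_le_mul_of_nonneg_right (mf_monotone hK hu0 hu.2) (by positivity)

lemma logf_diff_ge (hK : IsKClass a ⊤) {s t : ℝ} (hs : 0 < s) (hst : s ≤ t) :
    mf a s * Real.log t - mf a s * Real.log s
      ≤ Real.log (fsum a t) - Real.log (fsum a s) := by
  have h := slope_le_slope (ψ := fun u => Real.log (fsum a u))
      (ψ' := fun u => mf a u / u)
      (φ := fun u => mf a s * Real.log u) (φ' := fun u => mf a s * u⁻¹) hst
      (fun u hu => (Real.hasDerivAt_log (lt_of_lt_of_le hs hu.1).ne').const_mul (mf a s))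
      (fun u hu => hasDerivAt_logf hK (lt_of_lt_of_le hs hu.1))
      ?_
  · simpa [mul_sub] using h
  · intro u hu
    have hu0 : 0 < u := lt_of_lt_of_le hs hu.1
    show mf a s * u⁻¹ ≤ mf a u / u
    rw [div_eq_mul_inv]
    exact mul_le_mul_of_nonneg_right (mf_monotone hK hs hu.1) (by positivity)

lemma logf_diff_ge_rpow (hK : IsKClass a ⊤) {s t r : ℝ} (hs : 0 < s) (hst : s ≤ t)
    (hr : 0 < r) (hm : ∀ u ∈ Set.Icc s t, u ^ r ≤ mf a u) :
    t ^ r / r - s ^ r / r ≤ Real.log (fsum a t) - Real.log (fsum a s) := by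
  have h := slope_le_slope (ψ := fun u => Real.log (fsum a u))
      (ψ' := fun u => mf a u / u)
      (φ := fun u => u ^ r / r) (φ' := fun u => u ^ (r - 1)) hst
      ?_ (fun u hu => hasDerivAt_logf hK (lt_of_lt_of_le hs hu.1)) ?_
  · exact h
  · intro u hu
    have hu0 : 0 < u := lt_of_lt_of_le hs hu.1
    have h2 := (Real.hasDerivAt_rpow_const (x := u) (p := r) (Or.inl hu0.ne')).div_const r
    refine h2.congr_deriv ?_
    rw [mul_comm, mul_div_assoc, div_self hr.ne', mul_one]
  · intro u hu
    have hu0 : 0 < u := lt_of_lt_of_le hs hu.1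
    show u ^ (r - 1) ≤ mf a u / u
    have e : u ^ (r - 1) = u ^ r / u := by
      rw [Real.rpow_sub hu0, Real.rpow_one]
    rw [e]
    gcongr
    exact hm u hu


lemma ineq_AB (hK : IsKClass a ⊤) :
    Filter.liminf (fun t : ℝ => ENNReal.ofReal (varf a t / mf a t)) atTop ≤
      Filter.liminf (fun t : ℝ => ENNReal.ofReal (Real.log (mf a t) / Real.log t)) atTop := by
  apply le_of_forall_lt
  intro c hc
  obtain ⟨c', hcc', hc'⟩ := exists_between hc
  have hc'top : c' ≠ ⊤ := hc'.ne_top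
  set r := c'.toReal with hrdef
  have hev : ∀ᶠ t in atTop, (r * mf a t ≤ varf a t) ∧ 1 ≤ t := by
    filter_upwards [eventually_lt_of_lt_liminf hc', eventually_ge_atTop (1:ℝ)] with t h1 ht
    refine ⟨?_, ht⟩
    have h2 : r < varf a t / mf a t := (ENNReal.lt_ofReal_iff_toReal_lt hc'top).1 h1
    have hm := mf_pos hK (lt_of_lt_of_le one_pos ht)
    have h3 := (lt_div_iff₀ hm).1 h2
    linarith
  obtain ⟨s₀, hs₀⟩ := eventually_atTop.1 hev
  have h1s₀ : 1 ≤ s₀ := (hs₀ s₀ le_rfl).2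
  have hs₀pos : 0 < s₀ := lt_of_lt_of_le one_pos h1s₀
  set C := Real.log (mf a s₀) - r * Real.log s₀ with hC
  have key : ∀ t, s₀ ≤ t → r * Real.log t + C ≤ Real.log (mf a t) := by
    intro t ht
    have h := logm_slope_ge hK hs₀pos ht (fun u hu => (hs₀ u hu.1).1)
    rw [hC]; linarith
  have hψ : Tendsto (fun t : ℝ => r + C / Real.log t) atTop (𝓝 r) := by
    have h0 : Tendsto (fun t : ℝ => C / Real.log t) atTop (𝓝 0) :=
      Tendsto.div_atTop tendsto_const_nhds Real.tendsto_log_atTop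
    simpa using tendsto_const_nhds.add h0
  have hle : ∀ᶠ t in atTop, ENNReal.ofReal (r + C / Real.log t)
      ≤ ENNReal.ofReal (Real.log (mf a t) / Real.log t) := by
    filter_upwards [eventually_ge_atTop s₀, eventually_gt_atTop (1:ℝ)] with t hts ht1
    have hlt : 0 < Real.log t := Real.log_pos ht1
    apply ENNReal.ofReal_le_ofReal
    rw [le_div_iff₀ hlt]
    have h := key t hts
    have e : (r + C / Real.log t) * Real.log t = r * Real.log t + C := by
      field_simp
    linarith [e ▸ h]
  calc c < c' := hcc'
    _ = ENNReal.ofReal r := (ENNReal.ofReal_toReal hc'top).symm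
    _ = Filter.liminf (fun t : ℝ => ENNReal.ofReal (r + C / Real.log t)) atTop :=
        (((ENNReal.continuous_ofReal.tendsto r).comp hψ).liminf_eq).symm
    _ ≤ _ := liminf_le_liminf hle

lemma ineq_EF (hK : IsKClass a ⊤) :
    Filter.limsup (fun t : ℝ => ENNReal.ofReal (Real.log (mf a t) / Real.log t)) atTop ≤
      Filter.limsup (fun t : ℝ => ENNReal.ofReal (varf a t / mf a t)) atTop := by
  apply le_of_forall_gt
  intro c hc
  obtain ⟨c', hc', hcc'⟩ := exists_between hc
  have hc'top : c' ≠ ⊤ := hcc'.ne_top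
  have hc'0 : c' ≠ 0 := (pos_of_gt hc').ne'
  set r := c'.toReal with hrdef
  have hev : ∀ᶠ t in atTop, (varf a t ≤ r * mf a t) ∧ 1 ≤ t := by
    filter_upwards [eventually_lt_of_limsup_lt hc', eventually_ge_atTop (1:ℝ)] with t h1 ht
    refine ⟨?_, ht⟩
    have ht0 : (0:ℝ) < t := lt_of_lt_of_le one_pos ht
    have hm := mf_pos hK ht0
    have hnn : 0 ≤ varf a t / mf a t := div_nonneg (varf_nonneg hK ht0) hm.le
    have h2 : varf a t / mf a t < r := (ENNReal.ofReal_lt_iff_lt_toReal hnn hc'top).1 h1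
    have := (div_lt_iff₀ hm).1 h2
    linarith
  obtain ⟨s₀, hs₀⟩ := eventually_atTop.1 hev
  have h1s₀ : 1 ≤ s₀ := (hs₀ s₀ le_rfl).2
  have hs₀pos : 0 < s₀ := lt_of_lt_of_le one_pos h1s₀
  set C := Real.log (mf a s₀) - r * Real.log s₀ with hC
  have key : ∀ t, s₀ ≤ t → Real.log (mf a t) ≤ r * Real.log t + C := by
    intro t ht
    have h := logm_slope_le hK hs₀pos ht (fun u hu => (hs₀ u hu.1).1)
    rw [hC]; linarith
  have hψ : Tendsto (fun t : ℝ => r + C / Real.log t) atTop (𝓝 r) := by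
    have h0 : Tendsto (fun t : ℝ => C / Real.log t) atTop (𝓝 0) :=
      Tendsto.div_atTop tendsto_const_nhds Real.tendsto_log_atTop
    simpa using tendsto_const_nhds.add h0
  have hle : ∀ᶠ t in atTop, ENNReal.ofReal (Real.log (mf a t) / Real.log t)
      ≤ ENNReal.ofReal (r + C / Real.log t) := by
    filter_upwards [eventually_ge_atTop s₀, eventually_gt_atTop (1:ℝ)] with t hts ht1
    have hlt : 0 < Real.log t := Real.log_pos ht1
    apply ENNReal.ofReal_le_ofReal
    rw [div_le_iff₀ hlt]
    have h := key t hts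
    have e : (r + C / Real.log t) * Real.log t = r * Real.log t + C := by
      field_simp
    linarith [e ▸ h]
  calc Filter.limsup (fun t : ℝ => ENNReal.ofReal (Real.log (mf a t) / Real.log t)) atTop
      ≤ Filter.limsup (fun t : ℝ => ENNReal.ofReal (r + C / Real.log t)) atTop :=
        limsup_le_limsup hle
    _ = ENNReal.ofReal r := ((ENNReal.continuous_ofReal.tendsto r).comp hψ).limsup_eq
    _ = c' := ENNReal.ofReal_toReal hc'top
    _ < c := hcc'


lemma ineq_BC (hK : IsKClass a ⊤) :
    Filter.liminf (fun t : ℝ => ENNReal.ofReal (Real.log (mf a t) / Real.log t)) atTop ≤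
      Filter.liminf
        (fun t : ℝ => ENNReal.ofReal (Real.log (Real.log (fsum a t)) / Real.log t)) atTop := by
  apply le_of_forall_lt
  intro c hc
  obtain ⟨c', hcc', hc'⟩ := exists_between hc
  have hc'top : c' ≠ ⊤ := hc'.ne_top
  have hc'0 : c' ≠ 0 := (lt_of_le_of_lt zero_le hcc').ne'
  set r := c'.toReal with hrdef
  have hr0 : 0 < r := ENNReal.toReal_pos hc'0 hc'top
  have hev : ∀ᶠ t in atTop, (t ^ r ≤ mf a t) ∧ 1 ≤ t := by
    filter_upwards [eventually_lt_of_lt_liminf hc', eventually_gt_atTop (1:ℝ)] with t h1 ht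
    have ht0 : (0:ℝ) < t := lt_trans one_pos ht
    have hlt : 0 < Real.log t := Real.log_pos ht
    have h2 : r < Real.log (mf a t) / Real.log t := (ENNReal.lt_ofReal_iff_toReal_lt hc'top).1 h1
    have h3 : r * Real.log t < Real.log (mf a t) := by
      have := (lt_div_iff₀ hlt).1 h2; linarith
    have hm := mf_pos hK ht0
    refine ⟨?_, ht.le⟩
    calc t ^ r = Real.exp (r * Real.log t) := by rw [Real.rpow_def_of_pos ht0 r, mul_comm]
      _ ≤ Real.exp (Real.log (mf a t)) := Real.exp_le_exp.2 h3.le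
      _ = mf a t := Real.exp_log hm
  obtain ⟨s₀, hs₀⟩ := eventually_atTop.1 hev
  have h1s₀ : 1 ≤ s₀ := (hs₀ s₀ le_rfl).2
  have hs₀pos : 0 < s₀ := lt_of_lt_of_le one_pos h1s₀
  set C := Real.log (fsum a s₀) - s₀ ^ r / r with hC
  have key : ∀ t, s₀ ≤ t → t ^ r / r + C ≤ Real.log (fsum a t) := by
    intro t ht
    have h := logf_diff_ge_rpow hK hs₀pos ht hr0 (fun u hu => (hs₀ u hu.1).1)
    rw [hC]; linarith
  have claim : ∀ ε : ℝ, 0 < ε → ENNReal.ofReal (r - ε) ≤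
      Filter.liminf
        (fun t : ℝ => ENNReal.ofReal (Real.log (Real.log (fsum a t)) / Real.log t)) atTop := by
    intro ε hε
    rcases le_or_gt (r - ε) 0 with hre | hre
    · simpa [ENNReal.ofReal_of_nonpos hre] using zero_le
    · have hT : Tendsto (fun t : ℝ => t ^ (r - ε) * (t ^ ε / r - 1) + C) atTop atTop := by
        apply tendsto_atTop_add_const_right
        apply Tendsto.atTop_mul_atTop₀ (tendsto_rpow_atTop hre)
        apply tendsto_atTop_add_const_right
        exact (tendsto_rpow_atTop hε).atTop_div_const hr0
      have hev2 : ∀ᶠ t : ℝ in atTop, t ^ (r - ε) ≤ Real.log (fsum a t) := by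
        filter_upwards [hT.eventually_ge_atTop 0, eventually_ge_atTop s₀,
          eventually_gt_atTop (1:ℝ)] with t h0 hts ht1
        have ht0 : (0:ℝ) < t := lt_trans one_pos ht1
        have e2 : t ^ (r - ε) * t ^ ε = t ^ r := by
          rw [← Real.rpow_add ht0]; ring_nf
        have e : t ^ (r - ε) * (t ^ ε / r - 1) + C = t ^ r / r - t ^ (r - ε) + C := by
          rw [mul_sub, mul_one, mul_div_assoc', e2]
        rw [e] at h0
        have := key t hts
        linarith
      have hev3 : ∀ᶠ t : ℝ in atTop, ENNReal.ofReal (r - ε)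
          ≤ ENNReal.ofReal (Real.log (Real.log (fsum a t)) / Real.log t) := by
        filter_upwards [hev2, eventually_gt_atTop (1:ℝ)] with t h2 ht1
        have ht0 : (0:ℝ) < t := lt_trans one_pos ht1
        have hlt : 0 < Real.log t := Real.log_pos ht1
        have hrp : 0 < t ^ (r - ε) := Real.rpow_pos_of_pos ht0 _
        have h4 : (r - ε) * Real.log t ≤ Real.log (Real.log (fsum a t)) := by
          calc (r - ε) * Real.log t = Real.log (t ^ (r - ε)) := (Real.log_rpow ht0 _).symm
            _ ≤ _ := (Real.log_le_log_iff hrp (lt_of_lt_of_le hrp h2)).2 h2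
        apply ENNReal.ofReal_le_ofReal
        rw [le_div_iff₀ hlt]
        exact h4
      exact le_liminf_of_le (h := hev3)
  have hseq : Tendsto (fun n : ℕ => ENNReal.ofReal (r - 1 / ((n:ℝ) + 1))) atTop
      (𝓝 (ENNReal.ofReal r)) := by
    apply (ENNReal.continuous_ofReal.tendsto r).comp
    have h0 : Tendsto (fun n : ℕ => 1 / ((n:ℝ) + 1)) atTop (𝓝 0) :=
      tendsto_one_div_add_atTop_nhds_zero_nat
    simpa using tendsto_const_nhds.sub h0
  have hfin := le_of_tendsto hseq
      (Eventually.of_forall fun n : ℕ => claim (1 / ((n:ℝ) + 1)) (by positivity))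
  calc c < c' := hcc'
    _ = ENNReal.ofReal r := (ENNReal.ofReal_toReal hc'top).symm
    _ ≤ _ := hfin


lemma ineq_DE (hK : IsKClass a ⊤) :
    Filter.limsup
        (fun t : ℝ => ENNReal.ofReal (Real.log (Real.log (fsum a t)) / Real.log t)) atTop ≤
      Filter.limsup (fun t : ℝ => ENNReal.ofReal (Real.log (mf a t) / Real.log t)) atTop := by
  apply le_of_forall_gt
  intro c hc
  obtain ⟨c', hc', hcc'⟩ := exists_between hc
  have hc'top : c' ≠ ⊤ := hcc'.ne_top
  have hc'0 : c' ≠ 0 := (lt_of_le_of_lt zero_le hc').ne'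
  set r := c'.toReal with hrdef
  have hr0 : 0 < r := ENNReal.toReal_pos hc'0 hc'top
  have hev : ∀ᶠ t in atTop, (mf a t ≤ t ^ r) ∧ 1 ≤ t := by
    filter_upwards [eventually_lt_of_limsup_lt hc', eventually_gt_atTop (1:ℝ)] with t h1 ht
    have ht0 : (0:ℝ) < t := lt_trans one_pos ht
    have hlt : 0 < Real.log t := Real.log_pos ht
    have hm := mf_pos hK ht0
    refine ⟨?_, ht.le⟩
    have h3 : Real.log (mf a t) ≤ r * Real.log t := by
      rcases le_or_gt (Real.log (mf a t)) 0 with h4 | h4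
      · have : 0 < r * Real.log t := mul_pos hr0 hlt
        linarith
      · have hnn : 0 ≤ Real.log (mf a t) / Real.log t := div_nonneg h4.le hlt.le
        have h2 : Real.log (mf a t) / Real.log t < r :=
          (ENNReal.ofReal_lt_iff_lt_toReal hnn hc'top).1 h1
        have := (div_lt_iff₀ hlt).1 h2
        linarith
    calc mf a t = Real.exp (Real.log (mf a t)) := (Real.exp_log hm).symm
      _ ≤ Real.exp (r * Real.log t) := Real.exp_le_exp.2 h3
      _ = t ^ r := by rw [Real.rpow_def_of_pos ht0, mul_comm]
  obtain ⟨s₀, hs₀⟩ := eventually_atTop.1 hev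
  have h1s₀ : 1 ≤ s₀ := (hs₀ s₀ le_rfl).2
  have hs₀pos : 0 < s₀ := lt_of_lt_of_le one_pos h1s₀
  set C := Real.log (fsum a s₀) with hC
  have key : ∀ t, s₀ ≤ t → Real.log (fsum a t) ≤ t ^ r * Real.log t + C := by
    intro t ht
    have h := logf_diff_le hK hs₀pos ht
    have hm0 : 0 ≤ mf a t := (mf_pos hK (lt_of_lt_of_le hs₀pos ht)).le
    have hls : 0 ≤ Real.log s₀ := Real.log_nonneg h1s₀
    have hlt : 0 ≤ Real.log t := Real.log_nonneg (le_trans h1s₀ ht)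
    have hmr : mf a t ≤ t ^ r := (hs₀ t ht).1
    have h6 : mf a t * Real.log t ≤ t ^ r * Real.log t :=
      mul_le_mul_of_nonneg_right hmr hlt
    have h7 : 0 ≤ mf a t * Real.log s₀ := mul_nonneg hm0 hls
    rw [hC]; linarith
  have claim : ∀ ε : ℝ, 0 < ε →
      Filter.limsup
        (fun t : ℝ => ENNReal.ofReal (Real.log (Real.log (fsum a t)) / Real.log t)) atTop
        ≤ ENNReal.ofReal (r + ε) := by
    intro ε hε
    have hlo := (isLittleO_log_rpow_atTop hε).def (by norm_num : (0:ℝ) < 1/2)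
    have hT : Tendsto (fun t : ℝ => t ^ r * (t ^ ε / 2) - C) atTop atTop := by
      apply tendsto_atTop_add_const_right
      exact (tendsto_rpow_atTop hr0).atTop_mul_atTop₀
        ((tendsto_rpow_atTop hε).atTop_div_const two_pos)
    have hev2 : ∀ᶠ t : ℝ in atTop, Real.log (fsum a t) ≤ t ^ (r + ε)
        ∧ 1 ≤ Real.log (fsum a t) ∧ 1 < t := by
      filter_upwards [hT.eventually_ge_atTop 0, eventually_ge_atTop s₀,
        eventually_gt_atTop (1:ℝ), hlo,
        (Real.tendsto_log_atTop.comp (fsum_tendsto hK)).eventually_ge_atTop 1]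
        with t h0 hts ht1 hlo1 hlf
      have ht0 : (0:ℝ) < t := lt_trans one_pos ht1
      have e2 : t ^ r * t ^ ε = t ^ (r + ε) := (Real.rpow_add ht0 _ _).symm
      have hlog : Real.log t ≤ t ^ ε / 2 := by
        rw [Real.norm_eq_abs, Real.norm_eq_abs, abs_of_nonneg (Real.log_nonneg ht1.le),
          abs_of_nonneg (Real.rpow_pos_of_pos ht0 ε).le] at hlo1
        linarith
      refine ⟨?_, hlf, ht1⟩
      have h5 := key t hts
      have h6 : t ^ r * Real.log t ≤ t ^ r * (t ^ ε / 2) :=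
        mul_le_mul_of_nonneg_left hlog (Real.rpow_pos_of_pos ht0 r).le
      have e3 : t ^ r * (t ^ ε / 2) = t ^ (r + ε) / 2 := by rw [mul_div_assoc', e2]
      rw [e3] at h0 h6
      linarith
    have hev3 : ∀ᶠ t : ℝ in atTop,
        ENNReal.ofReal (Real.log (Real.log (fsum a t)) / Real.log t)
          ≤ ENNReal.ofReal (r + ε) := by
      filter_upwards [hev2] with t ht
      obtain ⟨h2, hlf, ht1⟩ := ht
      have ht0 : (0:ℝ) < t := lt_trans one_pos ht1
      have hlt : 0 < Real.log t := Real.log_pos ht1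
      apply ENNReal.ofReal_le_ofReal
      rw [div_le_iff₀ hlt]
      calc Real.log (Real.log (fsum a t)) ≤ Real.log (t ^ (r + ε)) := by
            apply (Real.log_le_log_iff (lt_of_lt_of_le one_pos hlf)
              (Real.rpow_pos_of_pos ht0 _)).2 h2
        _ = (r + ε) * Real.log t := Real.log_rpow ht0 _
    exact limsup_le_of_le (h := hev3)
  have hseq : Tendsto (fun n : ℕ => ENNReal.ofReal (r + 1 / ((n:ℝ) + 1))) atTop
      (𝓝 (ENNReal.ofReal r)) := by
    apply (ENNReal.continuous_ofReal.tendsto r).comp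
    have h0 : Tendsto (fun n : ℕ => 1 / ((n:ℝ) + 1)) atTop (𝓝 0) :=
      tendsto_one_div_add_atTop_nhds_zero_nat
    simpa using tendsto_const_nhds.add h0
  have hfin := ge_of_tendsto hseq
    (Eventually.of_forall fun n : ℕ => claim (1 / ((n:ℝ) + 1)) (by positivity))
  calc Filter.limsup
        (fun t : ℝ => ENNReal.ofReal (Real.log (Real.log (fsum a t)) / Real.log t)) atTop
      ≤ ENNReal.ofReal r := hfin
    _ = c' := ENNReal.ofReal_toReal hc'top
    _ < c := hcc'

lemma ineq_ED (hK : IsKClass a ⊤) :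
    Filter.limsup (fun t : ℝ => ENNReal.ofReal (Real.log (mf a t) / Real.log t)) atTop ≤
      Filter.limsup
        (fun t : ℝ => ENNReal.ofReal (Real.log (Real.log (fsum a t)) / Real.log t)) atTop := by
  apply le_of_forall_lt
  intro c hc
  obtain ⟨c', hcc', hc'⟩ := exists_between hc
  have hc'top : c' ≠ ⊤ := hc'.ne_top
  have hc'0 : c' ≠ 0 := (lt_of_le_of_lt zero_le hcc').ne'
  set r := c'.toReal with hrdef
  have hr0 : 0 < r := ENNReal.toReal_pos hc'0 hc'top
  have claim : ∀ δ : ℝ, 0 < δ → ENNReal.ofReal (r / (1 + δ)) ≤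
      Filter.limsup
        (fun t : ℝ => ENNReal.ofReal (Real.log (Real.log (fsum a t)) / Real.log t)) atTop := by
    intro δ hδ
    have hfreq : ∃ᶠ t in atTop, c' < ENNReal.ofReal (Real.log (mf a t) / Real.log t) :=
      frequently_lt_of_lt_limsup (h := hc')
    have hev : ∀ᶠ t : ℝ in atTop, 1 < t ∧ 1 ≤ δ * Real.log t ∧ 1 ≤ fsum a t := by
      filter_upwards [eventually_gt_atTop (1:ℝ),
        (Real.tendsto_log_atTop.const_mul_atTop hδ).eventually_ge_atTop 1,
        (fsum_tendsto hK).eventually_ge_atTop 1] with t h1 h2 h3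
      exact ⟨h1, h2, h3⟩
    have hfreq2 := hfreq.and_eventually hev
    have hmap : Tendsto (fun t : ℝ => t ^ (1 + δ)) atTop atTop :=
      tendsto_rpow_atTop (by linarith)
    have hfreq3 : ∃ᶠ s in atTop, ENNReal.ofReal (r / (1 + δ))
        ≤ ENNReal.ofReal (Real.log (Real.log (fsum a s)) / Real.log s) := by
      apply hmap.frequently
      apply hfreq2.mono
      rintro t ⟨h1, ht1, hδt, hf1⟩
      have ht0 : (0:ℝ) < t := lt_trans one_pos ht1
      have hlt : 0 < Real.log t := Real.log_pos ht1
      have hmt : t ^ r ≤ mf a t := by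
        have h2 : r < Real.log (mf a t) / Real.log t :=
          (ENNReal.lt_ofReal_iff_toReal_lt hc'top).1 h1
        have h3 : r * Real.log t < Real.log (mf a t) := by
          have := (lt_div_iff₀ hlt).1 h2; linarith
        have hm := mf_pos hK ht0
        calc t ^ r = Real.exp (r * Real.log t) := by
              rw [Real.rpow_def_of_pos ht0, mul_comm]
          _ ≤ Real.exp (Real.log (mf a t)) := Real.exp_le_exp.2 h3.le
          _ = mf a t := Real.exp_log hm
      have hts : t ≤ t ^ (1 + δ) := by
        calc t = t ^ (1:ℝ) := (Real.rpow_one t).symm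
          _ ≤ t ^ (1 + δ) := Real.rpow_le_rpow_of_exponent_le ht1.le (by linarith)
      have hlogs : Real.log (t ^ (1 + δ)) = (1 + δ) * Real.log t := Real.log_rpow ht0 _
      have h := logf_diff_ge hK ht0 hts
      have hlf : 0 ≤ Real.log (fsum a t) := Real.log_nonneg hf1
      have hstep : t ^ r ≤ Real.log (fsum a (t ^ (1 + δ))) := by
        have e : mf a t * Real.log (t ^ (1 + δ)) - mf a t * Real.log t
            = mf a t * (δ * Real.log t) := by rw [hlogs]; ring
        have h7 : t ^ r * 1 ≤ mf a t * (δ * Real.log t) :=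
          mul_le_mul hmt hδt (by norm_num) (mf_pos hK ht0).le
        rw [e] at h
        linarith
      have hrp : 0 < t ^ r := Real.rpow_pos_of_pos ht0 _
      have hlls : r * Real.log t ≤ Real.log (Real.log (fsum a (t ^ (1 + δ)))) := by
        calc r * Real.log t = Real.log (t ^ r) := (Real.log_rpow ht0 _).symm
          _ ≤ _ := (Real.log_le_log_iff hrp (lt_of_lt_of_le hrp hstep)).2 hstep
      have hlogs_pos : 0 < Real.log (t ^ (1 + δ)) := by
        rw [hlogs]; exact mul_pos (by linarith) hlt
      apply ENNReal.ofReal_le_ofReal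
      rw [le_div_iff₀ hlogs_pos, hlogs]
      calc r / (1 + δ) * ((1 + δ) * Real.log t) = r * Real.log t := by
            field_simp
        _ ≤ _ := hlls
    exact le_limsup_of_frequently_le hfreq3
  have hseq : Tendsto (fun n : ℕ => ENNReal.ofReal (r / (1 + 1 / ((n:ℝ) + 1)))) atTop
      (𝓝 (ENNReal.ofReal r)) := by
    apply (ENNReal.continuous_ofReal.tendsto r).comp
    have h0 : Tendsto (fun n : ℕ => 1 / ((n:ℝ) + 1)) atTop (𝓝 0) :=
      tendsto_one_div_add_atTop_nhds_zero_nat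
    have h1 : Tendsto (fun n : ℕ => 1 + 1 / ((n:ℝ) + 1)) atTop (𝓝 1) := by
      simpa using tendsto_const_nhds.add h0
    have := (tendsto_const_nhds (x := r)).div h1 (by norm_num)
    simpa [Pi.div_def] using this
  have hfin := le_of_tendsto hseq
    (Eventually.of_forall fun n : ℕ => claim (1 / ((n:ℝ) + 1)) (by positivity))
  calc c < c' := hcc'
    _ = ENNReal.ofReal r := (ENNReal.ofReal_toReal hc'top).symm
    _ ≤ _ := hfin

end Setup


/-- the chain of inequalities
`liminf σ²/m ≤ liminf ln m/ln t ≤ liminf lnln f/ln t ≤ limsup lnln f/ln t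
 = limsup ln m/ln t = ρ(f) ≤ limsup σ²/m` (all as `t → ∞`, in `[0,∞]`;
`ρ(f) = limsup lnln f/ln t` by definition). -/
theorem order_and_var_over_mean (a : ℕ → ℝ) (hK : IsKClass a ⊤) :
    Filter.liminf (fun t : ℝ => ENNReal.ofReal (varf a t / mf a t)) atTop ≤
      Filter.liminf (fun t : ℝ => ENNReal.ofReal (Real.log (mf a t) / Real.log t)) atTop ∧
    Filter.liminf (fun t : ℝ => ENNReal.ofReal (Real.log (mf a t) / Real.log t)) atTop ≤
      Filter.liminf
        (fun t : ℝ => ENNReal.ofReal (Real.log (Real.log (fsum a t)) / Real.log t)) atTop ∧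
    Filter.liminf
        (fun t : ℝ => ENNReal.ofReal (Real.log (Real.log (fsum a t)) / Real.log t)) atTop ≤
      Filter.limsup
        (fun t : ℝ => ENNReal.ofReal (Real.log (Real.log (fsum a t)) / Real.log t)) atTop ∧
    Filter.limsup
        (fun t : ℝ => ENNReal.ofReal (Real.log (Real.log (fsum a t)) / Real.log t)) atTop =
      Filter.limsup (fun t : ℝ => ENNReal.ofReal (Real.log (mf a t) / Real.log t)) atTop ∧
    Filter.limsup
        (fun t : ℝ => ENNReal.ofReal (Real.log (Real.log (fsum a t)) / Real.log t)) atTop ≤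
      Filter.limsup (fun t : ℝ => ENNReal.ofReal (varf a t / mf a t)) atTop := by
  refine ⟨ineq_AB hK, ineq_BC hK, liminf_le_limsup, le_antisymm (ineq_DE hK) (ineq_ED hK),
    le_trans (ineq_DE hK) (ineq_EF hK)⟩
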